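/- arXiv:1903.10986 — 5 statements merged into one kernel-verified Lean document; each statement's English description precedes it below -/
import Mathlib

section
/- Let F be a field and let A be an r × ℓ matrix over F that is superregular. Then for every s with 1 ≤ s ≤ ℓ, every vector of F^r that is a linear combination of s distinct columns of A with all s coefficients nonzero has at most s − 1 zero entries (equivalently, it has at least r − s + 1 nonzero entries). -/
open Matrix Finset

/-- A matrix over a field is superregular if every minor is nonzero, i.e. every square
submatrix obtained by selecting rows and columns via strictly increasing index maps
has nonzero determinant. -/
def Superregular {F : Type*} [Field F] {r ℓ : ℕ} (A : Matrix (Fin r) (Fin ℓ) F) : Prop :=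
  ∀ (s : ℕ) (f : Fin s → Fin r) (g : Fin s → Fin ℓ),
    StrictMono f → StrictMono g → (A.submatrix f g).det ≠ 0

/-- If `A` is superregular, every vector which is a linear combination of `s` distinct
columns of `A` with all coefficients nonzero has at most `s - 1` zero entries. -/
theorem superregular_linear_combination_zeros {F : Type*} [Field F] [DecidableEq F]
    {r ℓ : ℕ} (A : Matrix (Fin r) (Fin ℓ) F) (hA : Superregular A)
    (s : ℕ) (hs1 : 1 ≤ s) (hs2 : s ≤ ℓ)
    (g : Fin s → Fin ℓ) (hg : Function.Injective g)
    (c : Fin s → F) (hc : ∀ j, c j ≠ 0)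
    (v : Fin r → F) (hv : v = fun i => ∑ j, c j * A i (g j)) :
    (Finset.univ.filter fun i => v i = 0).card ≤ s - 1 := by
  by_contra h
  push_neg at h
  have hsc : s ≤ (Finset.univ.filter fun i => v i = 0).card := by omega
  -- choose s rows where v vanishes
  obtain ⟨T, hTsub, hTcard⟩ := Finset.exists_subset_card_eq hsc
  let f : Fin s → Fin r := T.orderEmbOfFin hTcard
  have hf : StrictMono f := (T.orderEmbOfFin hTcard).strictMono
  have hfz : ∀ i, v (f i) = 0 := by
    intro i
    have : f i ∈ T := T.orderEmbOfFin_mem hTcard i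
    have := hTsub this
    simpa using (Finset.mem_filter.mp this).2
  -- sort the columns
  set S : Finset (Fin ℓ) := Finset.image g Finset.univ with hS
  have hScard : S.card = s := by
    rw [hS, Finset.card_image_of_injective _ hg, Finset.card_univ, Fintype.card_fin]
  let g' : Fin s → Fin ℓ := S.orderEmbOfFin hScard
  have hg' : StrictMono g' := (S.orderEmbOfFin hScard).strictMono
  -- a bijection τ with g ∘ τ = g'
  have hex : ∀ j, ∃ k, g k = g' j := by
    intro j
    have : g' j ∈ S := S.orderEmbOfFin_mem hScard j
    rw [hS, Finset.mem_image] at this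
    obtain ⟨k, _, hk⟩ := this
    exact ⟨k, hk⟩
  choose τ hτ using hex
  have hτinj : Function.Injective τ := by
    intro a b hab
    apply hg'.injective
    rw [← hτ a, ← hτ b, hab]
  have hτbij : Function.Bijective τ := Finite.injective_iff_bijective.mp hτinj
  let σ : Equiv.Perm (Fin s) := Equiv.ofBijective τ hτbij
  -- superregularity gives nonzero determinant
  have hdet : (A.submatrix f g').det ≠ 0 := hA s f g' hf hg'
  -- the vector c ∘ σ is in the kernel
  have hker : (A.submatrix f g').mulVec (c ∘ σ) = 0 := by
    funext i
    have : v (f i) = 0 := hfz i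
    rw [hv] at this
    simp only [Matrix.mulVec, dotProduct, Matrix.submatrix_apply, Function.comp,
      Pi.zero_apply]
    calc ∑ j, A (f i) (g' j) * c (σ j)
        = ∑ j, c (σ j) * A (f i) (g (σ j)) := by
          refine Finset.sum_congr rfl fun j _ => ?_
          rw [show g (σ j) = g' j from hτ j, mul_comm]
      _ = ∑ j, c j * A (f i) (g j) := Equiv.sum_comp σ (fun j => c j * A (f i) (g j))
      _ = 0 := this
  have := Matrix.eq_zero_of_mulVec_eq_zero hdet hker
  exact hc _ (congrFun this ⟨0, hs1⟩)
end

section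
/- Let F be a finite field with |F| = q where q is odd, let α be an element of F of multiplicative order (q−1)/2, and let b be a nonsquare element of F. Then the ((q−1)/2) × ((q−1)/2) matrix C = [c_{ij}] with entries c_{ij} = 1/(1 − b·α^{j−i}) for 0 ≤ i, j ≤ (q−3)/2 is superregular. -/
open Matrix Finset

/-!
`C` is the row scaling `diag(α^i) · [1 / (α^i - b α^j)]` of a Cauchy matrix, and every square
submatrix of a Cauchy matrix with distinct nodes is again such a Cauchy matrix, hence invertible.
The nodes are distinct since `α` has order `(q-1)/2`, and `α^i ≠ b α^j` because `α` is a square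
(Euler's criterion) while `b` is not.
-/

section Cauchy

variable {F : Type*} [Field F]

theorem det_cauchy_ne_zero {ι : Type*} [Fintype ι] [DecidableEq ι] {x y : ι → F}
    (hx : Function.Injective x) (hy : Function.Injective y) (hxy : ∀ i j, x i ≠ y j) :
    (of fun i j => (x i - y j)⁻¹).det ≠ 0 := by
  rw [Ne, ← exists_mulVec_eq_zero_iff]
  rintro ⟨v, hv, hMv⟩
  apply hv
  have hw : ∀ j, Lagrange.nodalWeight univ y j ≠ 0 := fun j =>
    Lagrange.nodalWeight_ne_zero hy.injOn (mem_univ j)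
  -- `∑ j, v j / (t - y j)` vanishes at every `x i`; its numerator is the interpolant `P` of the
  -- values `v j / nodalWeight y j` at the nodes `y j`, of degree `< #ι` with `#ι` roots.
  set P := Lagrange.interpolate univ y fun j => (Lagrange.nodalWeight univ y j)⁻¹ * v j
  have hP_root : ∀ i ∈ (univ : Finset ι), P.eval (x i) = 0 := by
    intro i _
    have hrow : ∑ j, (x i - y j)⁻¹ * v j = 0 := by
      simpa [mulVec, dotProduct] using congrFun hMv i
    rw [Lagrange.eval_interpolate_not_at_node _ fun j _ => hxy i j]
    convert mul_zero _ using 2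
    rw [← hrow]
    refine sum_congr rfl fun j _ => ?_
    rw [mul_assoc, mul_left_comm _ (_)⁻¹, mul_inv_cancel_left₀ (hw j)]
  have hP : P = 0 := Polynomial.eq_zero_of_degree_lt_of_eval_index_eq_zero univ hx.injOn
    (Lagrange.degree_interpolate_lt _ hy.injOn) hP_root
  ext j
  have hPj : P.eval (y j) = _ := Lagrange.eval_interpolate_at_node _ hy.injOn (mem_univ j)
  rw [hP, Polynomial.eval_zero] at hPj
  simpa [hw j] using hPj.symm

variable {r ℓ : ℕ}

theorem superregular_cauchy {x : Fin r → F} {y : Fin ℓ → F}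
    (hx : Function.Injective x) (hy : Function.Injective y) (hxy : ∀ i j, x i ≠ y j) :
    Superregular (of fun i j => (x i - y j)⁻¹) := fun _ f g hf hg =>
  det_cauchy_ne_zero (hx.comp hf.injective) (hy.comp hg.injective) fun i j => hxy (f i) (g j)

theorem Superregular.diagonal_mul {A : Matrix (Fin r) (Fin ℓ) F} (hA : Superregular A)
    {d : Fin r → F} (hd : ∀ i, d i ≠ 0) : Superregular (diagonal d * A) := by
  intro s f g hf hg
  have hsub : (diagonal d * A).submatrix f g = of fun i j => d (f i) * A.submatrix f g i j := by
    ext i j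
    simp
  rw [hsub, det_mul_column]
  exact mul_ne_zero (prod_ne_zero_iff.2 fun i _ => hd (f i)) (hA s f g hf hg)

end Cauchy

theorem cauchy_circulant_superregular_general {F : Type*} [Field F] [Fintype F]
    {q : ℕ} (hq : Fintype.card F = q)
    (α : F) (hα : orderOf α = (q - 1) / 2)
    (b : F) (hb : ¬ IsSquare b)
    (C : Matrix (Fin ((q - 1) / 2)) (Fin ((q - 1) / 2)) F)
    (hC : ∀ i j, C i j = (1 - b * α ^ ((j : ℤ) - (i : ℤ)))⁻¹) :
    Superregular C := by
  have hchar : ringChar F ≠ 2 := fun h => hb (FiniteField.isSquare_of_char_two h b)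
  have hq_odd : q % 2 = 1 := hq ▸ FiniteField.odd_card_of_char_ne_two hchar
  have hq_two : 2 ≤ q := hq ▸ Fintype.one_lt_card
  have hα0 : α ≠ 0 := by
    rintro rfl
    rw [orderOf_zero] at hα
    omega
  have hα_sq : IsSquare α := by
    rw [FiniteField.isSquare_iff hchar hα0, hq, show q / 2 = (q - 1) / 2 by omega, ← hα]
    exact pow_orderOf_eq_one α
  set x : Fin ((q - 1) / 2) → F := fun i => α ^ (i : ℕ)
  set y : Fin ((q - 1) / 2) → F := fun j => b * α ^ (j : ℕ)
  have hx : Function.Injective x := fun i j h =>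
    Fin.ext (pow_injOn_Iio_orderOf (by simp [hα]) (by simp [hα]) h)
  have hy : Function.Injective y := fun i j h => hx (mul_left_cancel₀ (by rintro rfl; simp at hb) h)
  have hxy : ∀ i j, x i ≠ y j := fun i j h => hb <| by
    rw [eq_div_of_mul_eq (pow_ne_zero _ hα0) h.symm]
    exact (hα_sq.pow _).div (hα_sq.pow _)
  have hC_eq : C = diagonal x * of fun i j => (x i - y j)⁻¹ := by
    ext i j
    rw [hC, diagonal_mul, of_apply, zpow_sub₀ hα0, zpow_natCast, zpow_natCast,
      show 1 - b * (α ^ (j : ℕ) / α ^ (i : ℕ)) = (x i - y j) / x i by simp only [x, y]; field_simp, inv_div,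
      div_eq_mul_inv]
  rw [hC_eq]
  exact (superregular_cauchy hx hy hxy).diagonal_mul fun i => pow_ne_zero _ hα0

/-- The Cauchy circulant matrix `C` with entries `c_{ij} = 1/(1 - b α^{j-i})`, where `α`
has multiplicative order `(q-1)/2` and `b` is a nonsquare, is superregular. -/
theorem cauchy_circulant_superregular {F : Type*} [Field F] [Fintype F]
    {q : ℕ} (hq : Fintype.card F = q) (hodd : Odd q)
    (α : F) (hα : orderOf α = (q - 1) / 2)
    (b : F) (hb : ¬ IsSquare b)
    (C : Matrix (Fin ((q - 1) / 2)) (Fin ((q - 1) / 2)) F)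
    (hC : ∀ i j, C i j = (1 - b * α ^ ((j : ℤ) - (i : ℤ)))⁻¹) :
    Superregular C :=
  cauchy_circulant_superregular_general hq α hα b hb C hC
end

section
/- Let α be a primitive element (a generator of the multiplicative group) of the finite field F = F_{p^N}, and let B = [ν_{iℓ}] be an r × m matrix over F with entries ν_{iℓ} = α^{β_{iℓ}} for positive integers β_{iℓ} satisfying: (a) if ℓ < ℓ' then 2β_{iℓ} ≤ β_{iℓ'}, and (b) if i < i' then 2β_{iℓ} ≤ β_{i'ℓ}. Suppose N is greater than every sum of the form Σ_{j=1}^{s} β_{i_{σ(j)} ℓ_j}, taken over any choice of s rows i_1 < … < i_s, any choice of s columns ℓ_1 < … < ℓ_s, and any permutation σ of {1,…,s} (i.e., N exceeds the exponent of α in any term appearing in the Leibniz expansion of any minor of B). Then B is superregular. -/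
open Matrix Finset

/-- Key combinatorial fact: with doubling exponents, the identity permutation gives the
strictly largest exponent sum among all permutations. -/
lemma exp_sum_lt {r m : ℕ} (β : Fin r → Fin m → ℕ)
    (hβpos : ∀ i ℓ, 0 < β i ℓ)
    (hcol : ∀ (i : Fin r) (ℓ ℓ' : Fin m), ℓ < ℓ' → 2 * β i ℓ ≤ β i ℓ')
    (hrow : ∀ (i i' : Fin r) (ℓ : Fin m), i < i' → 2 * β i ℓ ≤ β i' ℓ)
    {s : ℕ} {f : Fin s → Fin r} {g : Fin s → Fin m}
    (hf : StrictMono f) (hg : StrictMono g)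
    {σ : Equiv.Perm (Fin s)} (hσ : σ ≠ 1) :
    ∑ j, β (f (σ j)) (g j) < ∑ j, β (f j) (g j) := by
  classical
  set S : Finset (Fin s) := univ.filter (fun j => σ j ≠ j) with hS
  have hmemS : ∀ j, j ∈ S ↔ σ j ≠ j := by
    intro j; simp [hS]
  have hSne : S.Nonempty := by
    rcases Finset.eq_empty_or_nonempty S with h | h
    · exact absurd (Equiv.ext fun j => not_not.1 fun hj =>
        (Finset.eq_empty_iff_forall_notMem.1 h j) ((hmemS j).2 hj)) hσ
    · exact h
  have key : ∀ j ∈ S, 2 * β (f (σ j)) (g j)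
      < β (f (σ j)) (g (σ j)) + β (f j) (g j) := by
    intro j hj
    rcases lt_or_gt_of_ne ((hmemS j).1 hj) with h | h
    · calc 2 * β (f (σ j)) (g j) ≤ β (f j) (g j) := hrow _ _ _ (hf h)
        _ < β (f (σ j)) (g (σ j)) + β (f j) (g j) :=
          Nat.lt_add_of_pos_left (hβpos _ _)
    · calc 2 * β (f (σ j)) (g j) ≤ β (f (σ j)) (g (σ j)) := hcol _ _ _ (hg h)
        _ < β (f (σ j)) (g (σ j)) + β (f j) (g j) :=
          Nat.lt_add_of_pos_right (hβpos _ _)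
  have hperm : ∑ j ∈ S, β (f (σ j)) (g (σ j)) = ∑ j ∈ S, β (f j) (g j) := by
    refine Finset.sum_equiv σ ?_ ?_
    · intro j
      simp only [hmemS]
      constructor
      · intro h hc
        exact h (σ.injective hc)
      · intro h hc
        exact h (by rw [hc]; exact hc)
    · intro j _; rfl
  have hsplit : ∀ (F : Fin s → ℕ), ∑ j, F j = ∑ j ∈ S, F j + ∑ j ∈ Sᶜ, F j := by
    intro F
    rw [Finset.sum_add_sum_compl]
  have hcomp : ∑ j ∈ Sᶜ, 2 * β (f (σ j)) (g j) = ∑ j ∈ Sᶜ, 2 * β (f j) (g j) := by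
    refine Finset.sum_congr rfl ?_
    intro j hj
    have hj' : σ j = j := not_not.1 (fun h => (Finset.mem_compl.1 hj) ((hmemS j).2 h))
    rw [hj']
  have h2 : 2 * ∑ j, β (f (σ j)) (g j) < 2 * ∑ j, β (f j) (g j) := by
    rw [Finset.mul_sum, Finset.mul_sum, hsplit (fun j => 2 * β (f (σ j)) (g j)),
      hsplit (fun j => 2 * β (f j) (g j)), hcomp]
    have hlt : ∑ j ∈ S, 2 * β (f (σ j)) (g j) < ∑ j ∈ S, 2 * β (f j) (g j) := by
      calc ∑ j ∈ S, 2 * β (f (σ j)) (g j)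
          < ∑ j ∈ S, (β (f (σ j)) (g (σ j)) + β (f j) (g j)) :=
            Finset.sum_lt_sum_of_nonempty hSne key
        _ = ∑ j ∈ S, β (f (σ j)) (g (σ j)) + ∑ j ∈ S, β (f j) (g j) := Finset.sum_add_distrib
        _ = ∑ j ∈ S, 2 * β (f j) (g j) := by
            rw [hperm, ← Finset.sum_add_distrib]
            exact Finset.sum_congr rfl fun j _ => (two_mul _).symm
    omega
  omega

/-- If `α` has a minimal polynomial of degree at least `n` over `K` and the exponent function
`E` on permutations attains a strict maximum at the identity with `E 1 < n`, then the signed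
sum `∑ σ, sign σ * α ^ E σ` is nonzero. -/
lemma aeval_sign_sum_ne_zero {K F : Type*} [Field K] [Field F] [Algebra K F]
    (α : F) {n : ℕ} (hmin : n ≤ (minpoly K α).natDegree)
    {s : ℕ} (E : Equiv.Perm (Fin s) → ℕ)
    (hElt : ∀ σ : Equiv.Perm (Fin s), σ ≠ 1 → E σ < E 1) (hEN : E 1 < n) :
    ∑ σ : Equiv.Perm (Fin s), ((Equiv.Perm.sign σ : ℤ) : F) * α ^ E σ ≠ 0 := by
  classical
  have hEle : ∀ σ : Equiv.Perm (Fin s), E σ ≤ E 1 := by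
    intro σ
    rcases eq_or_ne σ 1 with rfl | hσ
    · exact le_refl _
    · exact (hElt σ hσ).le
  set P : Polynomial K :=
    ∑ σ : Equiv.Perm (Fin s),
      Polynomial.C ((Equiv.Perm.sign σ : ℤ) : K) * Polynomial.X ^ E σ with hP
  have hPcoeff : P.coeff (E 1) = 1 := by
    rw [hP, Polynomial.finset_sum_coeff, Finset.sum_eq_single 1]
    · simp [Polynomial.coeff_C_mul, Polynomial.coeff_X_pow]
    · intro σ _ hσ
      have hne := (hElt σ hσ).ne
      simp only [Polynomial.coeff_C_mul, Polynomial.coeff_X_pow]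
      rw [if_neg (Ne.symm hne), mul_zero]
    · simp
  have hPne : P ≠ 0 := fun h => by simp [h] at hPcoeff
  have hPdeg : P.natDegree < n := by
    have h1 : P.natDegree ≤ E 1 := by
      apply Polynomial.natDegree_sum_le_of_forall_le
      intro σ _
      refine le_trans (Polynomial.natDegree_C_mul_le _ _) ?_
      simp only [Polynomial.natDegree_X_pow]
      exact hEle σ
    exact lt_of_le_of_lt h1 hEN
  have heval : (Polynomial.aeval α) P
      = ∑ σ : Equiv.Perm (Fin s), ((Equiv.Perm.sign σ : ℤ) : F) * α ^ E σ := by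
    rw [hP, map_sum]
    refine Finset.sum_congr rfl fun σ _ => ?_
    rw [_root_.map_mul, map_pow, Polynomial.aeval_X, Polynomial.aeval_C, map_intCast]
  rw [← heval]
  intro h0
  have hdvd := minpoly.dvd K α h0
  have hled := Polynomial.natDegree_le_of_dvd hdvd hPne
  omega

/-- Let `α` be a primitive element of `F = F_{p^N}` and `B = [α^{β_{iℓ}}]` with positive
exponents doubling along rows and columns.  If `N` exceeds the exponent of `α` in any term
of the Leibniz expansion of any minor of `B`, then `B` is superregular. -/
theorem doubling_exponent_superregular {F : Type*} [Field F] [Fintype F]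
    {p N : ℕ} (hp : p.Prime) (hcard : Fintype.card F = p ^ N)
    (α : F) (hα : orderOf α = p ^ N - 1)
    {r m : ℕ} (β : Fin r → Fin m → ℕ)
    (hβpos : ∀ i ℓ, 0 < β i ℓ)
    (hcol : ∀ (i : Fin r) (ℓ ℓ' : Fin m), ℓ < ℓ' → 2 * β i ℓ ≤ β i ℓ')
    (hrow : ∀ (i i' : Fin r) (ℓ : Fin m), i < i' → 2 * β i ℓ ≤ β i' ℓ)
    (hN : ∀ (s : ℕ) (f : Fin s → Fin r) (g : Fin s → Fin m),
      StrictMono f → StrictMono g → ∀ σ : Equiv.Perm (Fin s),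
        (∑ j, β (f (σ j)) (g j)) < N)
    (B : Matrix (Fin r) (Fin m) F) (hB : ∀ i ℓ, B i ℓ = α ^ β i ℓ) :
    Superregular B := by
  classical
  intro s f g hf hg
  haveI : Fact p.Prime := ⟨hp⟩
  have hcard1 : 1 < Fintype.card F := Fintype.one_lt_card
  have hpn1 : 0 < p ^ N - 1 := by rw [← hcard]; omega
  -- the characteristic of `F` is `p`
  have hcharP : CharP F p := by
    obtain ⟨n, hpr, hcard'⟩ := FiniteField.card F (ringChar F)
    have hdvd : ringChar F ∣ p ^ N := by
      rw [← hcard, hcard']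
      exact dvd_pow_self _ n.ne_zero
    have hrp : ringChar F = p := (Nat.prime_dvd_prime_iff_eq hpr hp).mp
      (hpr.dvd_of_dvd_pow hdvd)
    rw [← hrp]
    exact ringChar.charP F
  letI : Algebra (ZMod p) F := ZMod.algebra F p
  -- `F` has dimension `N` over its prime field
  have hfr : Module.finrank (ZMod p) F = N := by
    have hc : Fintype.card F = p ^ Module.finrank (ZMod p) F := by
      have := Module.card_eq_pow_finrank (K := ZMod p) (V := F)
      rwa [ZMod.card] at this
    rw [hcard] at hc
    exact (Nat.pow_right_injective hp.two_le hc).symm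
  -- `α` is nonzero
  have hα0 : α ≠ 0 := by
    intro h
    have h1 := pow_orderOf_eq_one α
    rw [hα, h, zero_pow hpn1.ne'] at h1
    exact zero_ne_one h1
  have hαint : IsIntegral (ZMod p) α := IsIntegral.of_finite _ _
  -- `α` generates `F` over the prime field
  have htop : IntermediateField.adjoin (ZMod p) {α} = ⊤ := by
    rw [eq_top_iff]
    rintro x -
    by_cases hx : x = 0
    · rw [hx]; exact zero_mem _
    · have h1 : orderOf (Units.mk0 α hα0) = p ^ N - 1 := by
        rw [← orderOf_units, Units.val_mk0, hα]
      have hzt : Subgroup.zpowers (Units.mk0 α hα0) = ⊤ := by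
        apply Subgroup.eq_top_of_card_eq
        rw [Nat.card_zpowers, h1, Nat.card_eq_fintype_card, Fintype.card_units, hcard]
      have hmem : Units.mk0 x hx ∈ Subgroup.zpowers (Units.mk0 α hα0) := by
        rw [hzt]; trivial
      obtain ⟨k, hk⟩ := mem_powers_iff_mem_zpowers.mpr hmem
      have hxk : α ^ k = x := by
        have := congrArg Units.val hk
        simpa using this
      exact hxk ▸ pow_mem (IntermediateField.mem_adjoin_simple_self (ZMod p) α) k
  -- hence the minimal polynomial of `α` has degree `N`
  have hdeg : (minpoly (ZMod p) α).natDegree = N := by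
    rw [← IntermediateField.adjoin.finrank hαint, htop, IntermediateField.finrank_top', hfr]
  -- rewrite the minor via the Leibniz formula
  have hdet : (B.submatrix f g).det
      = ∑ σ : Equiv.Perm (Fin s),
          ((Equiv.Perm.sign σ : ℤ) : F) * α ^ (∑ j, β (f (σ j)) (g j)) := by
    rw [Matrix.det_apply']
    refine Finset.sum_congr rfl fun σ _ => ?_
    congr 1
    calc ∏ j, (B.submatrix f g) (σ j) j = ∏ j, α ^ β (f (σ j)) (g j) := by
          refine Finset.prod_congr rfl fun j _ => ?_
          rw [Matrix.submatrix_apply, hB]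
      _ = α ^ (∑ j, β (f (σ j)) (g j)) := Finset.prod_pow_eq_pow_sum _ _ _
  rw [hdet]
  exact aeval_sign_sum_ne_zero α hdeg.ge (fun σ => ∑ j, β (f (σ j)) (g j))
    (fun σ hσ => by simpa using exp_sum_lt β hβpos hcol hrow hf hg hσ)
    (hN s f g hf hg 1)
end

section
/- Let F be a finite field, n, k, δ positive integers with k < n, ν = ⌊δ/k⌋ + 1, t = δ − k⌊δ/k⌋. Let G(z) = [g_1(z) … g_k(z)] ∈ F[z]^{n×k}, where g_r(z) = Σ_{i=0}^{ν} g_{i,r} z^i for 1 ≤ r ≤ t and g_r(z) = Σ_{i=0}^{ν−1} g_{i,r} z^i for t+1 ≤ r ≤ k, with coefficient vectors g_{i,r} ∈ F^n, and let 𝒢 ∈ F^{n×(δ+k)} be the matrix with columns g_{0,1},…,g_{ν,1},…,g_{0,t},…,g_{ν,t},g_{0,t+1},…,g_{ν−1,t+1},…,g_{0,k},…,g_{ν−1,k}. If 𝒢 is superregular, then G(z) is column reduced, it has full column rank over F[z], and the convolutional code Im_{F[z]} G(z) ⊆ F[z]^n has rate k/n and degree δ (i.e., the maximal degree of the k ×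 k minors of G(z) equals δ). -/
open Matrix Polynomial Finset

/-- The maximal degree of the `k × k` minors of a polynomial matrix `G`. -/
noncomputable def maxMinorDeg {F : Type*} [Field F] {n k : ℕ}
    (G : Matrix (Fin n) (Fin k) (Polynomial F)) : ℕ :=
  Finset.univ.sup fun f : Fin k → Fin n => ((G.submatrix f id).det).natDegree

/-- The weight of a polynomial vector: the total number of nonzero coefficients. -/
def polyWeight {F : Type*} [Field F] {n : ℕ} (v : Fin n → Polynomial F) : ℕ :=
  ∑ x : Fin n, (v x).support.card

/-- The free distance of the convolutional code generated by `G`: the minimal weight of a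
nonzero codeword of `Im_{F[z]} G(z)`. -/
noncomputable def freeDist {F : Type*} [Field F] {n k : ℕ}
    (G : Matrix (Fin n) (Fin k) (Polynomial F)) : ℕ :=
  sInf {w : ℕ | ∃ u : Fin k → Polynomial F, G.mulVec u ≠ 0 ∧ w = polyWeight (G.mulVec u)}

/-- Column degree profile: `q+1` for the first `t` columns, `q` for the rest. -/
def auxC (t q r : ℕ) : ℕ := if r < t then q + 1 else q

/-- Position inside `𝒢` of the leading coefficient of column `r`. -/
def auxCol (t q r : ℕ) : ℕ :=
  if r < t then r * (q + 1 + 1) + (q + 1) else t * (q + 1 + 1) + (r - t) * (q + 1) + q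

lemma auxCol_strictMono (t q : ℕ) : StrictMono (auxCol t q) := by
  apply strictMono_nat_of_lt_succ
  intro r
  rcases lt_or_ge (r + 1) t with h1 | h1
  · have h0 : r < t := by omega
    unfold auxCol
    rw [if_pos h0, if_pos h1]
    have h2 : (r + 1) * (q + 1 + 1) = r * (q + 1 + 1) + (q + 1 + 1) := by ring
    omega
  · rcases lt_or_ge r t with h0 | h0
    · have h2 : t = r + 1 := by omega
      unfold auxCol
      rw [if_pos h0, if_neg (by omega)]
      subst h2
      have h3 : (r + 1) * (q + 1 + 1) = r * (q + 1 + 1) + (q + 1 + 1) := by ring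
      have h4 : (r + 1 - (r + 1)) = 0 := by omega
      rw [h4]
      omega
    · obtain ⟨s, rfl⟩ : ∃ s, r = t + s := ⟨r - t, by omega⟩
      unfold auxCol
      rw [if_neg (by omega), if_neg (by omega)]
      have e1 : t + s - t = s := by omega
      have e2 : t + s + 1 - t = s + 1 := by omega
      rw [e1, e2]
      have h3 : (s + 1) * (q + 1) = s * (q + 1) + (q + 1) := by ring
      omega

lemma aux_div_mod (d a b : ℕ) (hb : b < d) :
    (a * d + b) % d = b ∧ (a * d + b) / d = a := by
  constructor
  · rw [mul_comm a d, Nat.mul_add_mod]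
    exact Nat.mod_eq_of_lt hb
  · rw [add_comm, Nat.add_mul_div_right _ _ (by omega : 0 < d), Nat.div_eq_of_lt hb, zero_add]

/-- If the matrix `𝒢` of coefficient vectors of `G(z)` is superregular, then `G(z)` is
column reduced, has full column rank over `F[z]`, and generates a convolutional code of
rate `k/n` and degree `δ`. -/
theorem superregular_coeff_generator_degree {F : Type*} [Field F] [Fintype F]
    {n k δ : ℕ} (hk : 0 < k) (hδ : 0 < δ) (hkn : k < n)
    (ν t : ℕ) (hν : ν = δ / k + 1) (ht : t = δ - k * (δ / k))
    (g : ℕ → ℕ → ℕ → F)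
    (G : Matrix (Fin n) (Fin k) (Polynomial F))
    (hG : ∀ (x : Fin n) (r : Fin k),
      G x r = ∑ i ∈ Finset.range (if (r : ℕ) < t then ν + 1 else ν),
        Polynomial.C (g i r x) * Polynomial.X ^ i)
    (𝒢 : Matrix (Fin n) (Fin (δ + k)) F)
    (h𝒢 : ∀ (x : Fin n) (c₀ : Fin (δ + k)),
      𝒢 x c₀ = if (c₀ : ℕ) < t * (ν + 1)
        then g ((c₀ : ℕ) % (ν + 1)) ((c₀ : ℕ) / (ν + 1)) x
        else g (((c₀ : ℕ) - t * (ν + 1)) % ν) (t + ((c₀ : ℕ) - t * (ν + 1)) / ν) x)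
    (hsup : Superregular 𝒢) :
    ((∑ r : Fin k, Finset.univ.sup fun x : Fin n => (G x r).natDegree) = maxMinorDeg G)
    ∧ (∀ u : Fin k → Polynomial F, G.mulVec u = 0 → u = 0)
    ∧ maxMinorDeg G = δ := by
  obtain ⟨q, hq⟩ : ∃ q', δ / k = q' := ⟨_, rfl⟩
  rw [hq] at hν ht
  subst hν
  have hdm : k * q + δ % k = δ := by rw [← hq]; exact Nat.div_add_mod δ k
  have hmlt : δ % k < k := Nat.mod_lt δ hk
  obtain ⟨w, hw⟩ : ∃ w', δ % k = w' := ⟨_, rfl⟩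
  rw [hw] at hdm hmlt
  clear hq hw
  have htk : t < k := by omega
  have htδ : k * q + t = δ := by omega
  have hlen : ∀ r : ℕ, (if r < t then q + 1 + 1 else q + 1) = auxC t q r + 1 := by
    intro r; unfold auxC; by_cases h : r < t <;> simp [h]
  have hcoeff : ∀ (x : Fin n) (r : Fin k) (j : ℕ),
      (G x r).coeff j = if j < auxC t q (r : ℕ) + 1 then g j (r : ℕ) x else 0 := by
    intro x r j
    rw [hG x r, hlen, Polynomial.finset_sum_coeff]
    simp only [Polynomial.coeff_C_mul, Polynomial.coeff_X_pow, mul_ite, mul_one, mul_zero]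
    rw [Finset.sum_ite_eq (Finset.range (auxC t q (r : ℕ) + 1)) j (fun i => g i (r : ℕ) x)]
    simp [Finset.mem_range]
  have hdegle : ∀ (x : Fin n) (r : Fin k), (G x r).natDegree ≤ auxC t q (r : ℕ) := by
    intro x r
    refine Polynomial.natDegree_le_iff_coeff_eq_zero.mpr fun m hm => ?_
    rw [hcoeff, if_neg (by omega)]
  obtain ⟨m, hkm⟩ : ∃ m, k = t + m + 1 := ⟨k - t - 1, by omega⟩
  have hcoltop : auxCol t q (k - 1) = δ + k - 1 := by
    unfold auxCol
    rw [if_neg (by omega)]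
    have e1 : k - 1 - t = m := by omega
    rw [e1, htδ.symm, hkm]
    ring_nf
    omega
  have hbound : ∀ r : Fin k, auxCol t q (r : ℕ) < δ + k := by
    intro r
    have hrk := r.isLt
    have h1 : auxCol t q (r : ℕ) ≤ auxCol t q (k - 1) :=
      (auxCol_strictMono t q).monotone (by omega)
    omega
  set cs : Fin k → Fin (δ + k) := fun r => ⟨auxCol t q (r : ℕ), hbound r⟩ with hcsdef
  have hcsmono : StrictMono cs := by
    intro a b hab
    simp only [hcsdef, Fin.lt_iff_val_lt_val]
    exact auxCol_strictMono t q (show (a : ℕ) < (b : ℕ) from hab)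
  have hGcs : ∀ (x : Fin n) (r : Fin k), 𝒢 x (cs r) = g (auxC t q (r : ℕ)) (r : ℕ) x := by
    intro x r
    rw [h𝒢 x (cs r)]
    rcases lt_or_ge (r : ℕ) t with h0 | h0
    · have hv : ((cs r : Fin (δ + k)) : ℕ) = (r : ℕ) * (q + 1 + 1) + (q + 1) := by
        simp only [hcsdef]
        unfold auxCol
        rw [if_pos h0]
      rw [hv, if_pos (by
        have h1 : ((r : ℕ) + 1) * (q + 1 + 1) ≤ t * (q + 1 + 1) :=
          Nat.mul_le_mul_right _ (by omega)
        have h2 : ((r : ℕ) + 1) * (q + 1 + 1) = (r : ℕ) * (q + 1 + 1) + (q + 1 + 1) := by ring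
        omega)]
      rw [(aux_div_mod _ _ _ (by omega)).1, (aux_div_mod _ _ _ (by omega)).2]
      unfold auxC
      rw [if_pos h0]
    · have hv : ((cs r : Fin (δ + k)) : ℕ) = t * (q + 1 + 1) + ((r : ℕ) - t) * (q + 1) + q := by
        simp only [hcsdef]
        unfold auxCol
        rw [if_neg (by omega)]
      rw [hv, if_neg (by omega)]
      have he : t * (q + 1 + 1) + ((r : ℕ) - t) * (q + 1) + q - t * (q + 1 + 1)
          = ((r : ℕ) - t) * (q + 1) + q := by omega
      rw [he, (aux_div_mod _ _ _ (by omega)).1, (aux_div_mod _ _ _ (by omega)).2]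
      have h3 : t + ((r : ℕ) - t) = (r : ℕ) := by omega
      rw [h3]
      unfold auxC
      rw [if_neg (by omega)]
  have h𝒢ne : ∀ (x : Fin n) (c₀ : Fin (δ + k)), 𝒢 x c₀ ≠ 0 := by
    intro x c₀
    have h1 := hsup 1 (fun _ => x) (fun _ => c₀)
      (fun i j hij => absurd (Subsingleton.elim i j) hij.ne)
      (fun i j hij => absurd (Subsingleton.elim i j) hij.ne)
    simpa [Matrix.det_fin_one] using h1
  have hlead : ∀ (x : Fin n) (r : Fin k),
      (G x r).coeff (auxC t q (r : ℕ)) = g (auxC t q (r : ℕ)) (r : ℕ) x := by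
    intro x r; rw [hcoeff, if_pos (Nat.lt_succ_self _)]
  have hleadne : ∀ (x : Fin n) (r : Fin k), g (auxC t q (r : ℕ)) (r : ℕ) x ≠ 0 := by
    intro x r
    have h1 := h𝒢ne x (cs r)
    rw [hGcs] at h1
    exact h1
  have hdeg : ∀ (x : Fin n) (r : Fin k), (G x r).natDegree = auxC t q (r : ℕ) := by
    intro x r
    refine le_antisymm (hdegle x r) (Polynomial.le_natDegree_of_ne_zero ?_)
    rw [hlead]; exact hleadne x r
  have hGne : ∀ (x : Fin n) (r : Fin k), G x r ≠ 0 := by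
    intro x r hz
    exact hleadne x r (by rw [← hlead, hz, Polynomial.coeff_zero])
  have hleadc : ∀ (x : Fin n) (r : Fin k),
      (G x r).leadingCoeff = g (auxC t q (r : ℕ)) (r : ℕ) x := by
    intro x r; rw [Polynomial.leadingCoeff, hdeg, hlead]
  have hsumc : (∑ r : Fin k, auxC t q (r : ℕ)) = δ := by
    rw [Fin.sum_univ_eq_sum_range (fun i => auxC t q i) k,
      ← Finset.sum_range_add_sum_Ico _ htk.le,
      Finset.sum_congr rfl (fun i hi => show auxC t q i = q + 1 by
        unfold auxC; rw [if_pos (Finset.mem_range.mp hi)]),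
      Finset.sum_congr rfl (fun i hi => show auxC t q i = q by
        unfold auxC; rw [if_neg (by have := (Finset.mem_Ico.mp hi).1; omega)]),
      Finset.sum_const, Finset.sum_const, Finset.card_range, Nat.card_Ico,
      smul_eq_mul, smul_eq_mul]
    have e1 : k - t = m + 1 := by omega
    rw [e1, ← htδ, hkm]
    ring
  have hminor_le : ∀ f : Fin k → Fin n, ((G.submatrix f id).det).natDegree ≤ δ := by
    intro f
    rw [Matrix.det_apply']
    refine Polynomial.natDegree_sum_le_of_forall_le _ _ fun σ _ => ?_
    refine le_trans Polynomial.natDegree_mul_le ?_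
    rw [Polynomial.natDegree_intCast, zero_add]
    refine le_trans (Polynomial.natDegree_prod_le _ _) ?_
    simp only [Matrix.submatrix_apply, id_eq]
    rw [Finset.sum_congr rfl (fun r _ => hdeg (f (σ r)) r)]
    exact hsumc.le
  set f0 : Fin k → Fin n := Fin.castLE hkn.le with hf0
  have hf0mono : StrictMono f0 := Fin.strictMono_castLE _
  have hprodcoeff : ∀ σ : Equiv.Perm (Fin k),
      (∏ r : Fin k, G (f0 (σ r)) r).coeff δ
        = ∏ r : Fin k, g (auxC t q (r : ℕ)) (r : ℕ) (f0 (σ r)) := by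
    intro σ
    have hnd : (∏ r : Fin k, G (f0 (σ r)) r).natDegree = δ := by
      rw [Polynomial.natDegree_prod _ _ (fun r _ => hGne (f0 (σ r)) r),
        Finset.sum_congr rfl (fun r _ => hdeg (f0 (σ r)) r)]
      exact hsumc
    rw [← hnd, Polynomial.coeff_natDegree, Polynomial.leadingCoeff_prod]
    exact Finset.prod_congr rfl fun r _ => hleadc (f0 (σ r)) r
  have hdetcoeff : ((G.submatrix f0 id).det).coeff δ = (𝒢.submatrix f0 cs).det := by
    rw [Matrix.det_apply', Matrix.det_apply', Polynomial.finset_sum_coeff]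
    refine Finset.sum_congr rfl fun σ _ => ?_
    simp only [Matrix.submatrix_apply, id_eq]
    rw [← Polynomial.C_eq_intCast, Polynomial.coeff_C_mul, hprodcoeff σ]
    congr 1
    exact Finset.prod_congr rfl fun r _ => (hGcs (f0 (σ r)) r).symm
  have hdetne : (𝒢.submatrix f0 cs).det ≠ 0 := hsup k f0 cs hf0mono hcsmono
  have hMcoeffne : ((G.submatrix f0 id).det).coeff δ ≠ 0 := by
    rw [hdetcoeff]; exact hdetne
  have hMdeg : ((G.submatrix f0 id).det).natDegree = δ :=
    le_antisymm (hminor_le f0) (Polynomial.le_natDegree_of_ne_zero hMcoeffne)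
  have hmax : maxMinorDeg G = δ := by
    unfold maxMinorDeg
    refine le_antisymm (Finset.sup_le fun f _ => hminor_le f) ?_
    rw [← hMdeg]
    exact Finset.le_sup (f := fun f : Fin k → Fin n => ((G.submatrix f id).det).natDegree)
      (Finset.mem_univ f0)
  have hn0 : 0 < n := lt_trans hk hkn
  have hsupr : ∀ r : Fin k,
      (Finset.univ.sup fun x : Fin n => (G x r).natDegree) = auxC t q (r : ℕ) := by
    intro r
    refine le_antisymm (Finset.sup_le fun x _ => (hdeg x r).le) ?_
    have hle := Finset.le_sup (f := fun x : Fin n => (G x r).natDegree)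
      (Finset.mem_univ (⟨0, hn0⟩ : Fin n))
    simpa [hdeg] using hle
  refine ⟨?_, ?_, hmax⟩
  · calc (∑ r : Fin k, Finset.univ.sup fun x : Fin n => (G x r).natDegree)
        = ∑ r : Fin k, auxC t q (r : ℕ) := Finset.sum_congr rfl fun r _ => hsupr r
      _ = δ := hsumc
      _ = maxMinorDeg G := hmax.symm
  · intro u hu
    have hM0 : (G.submatrix f0 id).mulVec u = 0 := by
      funext x
      have h1 : (G.mulVec u) (f0 x) = 0 := by rw [hu]; rfl
      simpa [Matrix.mulVec, Matrix.submatrix_apply, dotProduct] using h1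
    have hdet0 : (G.submatrix f0 id).det ≠ 0 := fun h =>
      hMcoeffne (by rw [h, Polynomial.coeff_zero])
    have h2 := congrArg (fun v => (G.submatrix f0 id).adjugate.mulVec v) hM0
    simp only [Matrix.mulVec_mulVec, Matrix.adjugate_mul, Matrix.mulVec_zero] at h2
    rw [Matrix.smul_mulVec, Matrix.one_mulVec] at h2
    funext r
    have h3 := congrFun h2 r
    simp only [Pi.smul_apply, Pi.zero_apply, smul_eq_mul] at h3
    exact (mul_eq_zero.mp h3).resolve_left hdet0
end

section
/- Let n, k, δ be positive integers with δ < k < n and n ≥ k + δ − 1, let p be a prime, N ≥ 2^{n+k+δ−1}, and let α be a primitive element of the finite field F_{p^N}. Let 𝒢 ∈ F_{p^N}^{n×(k+δ)} be the matrix with entry α^{2^{i+j}} in row i and column j for 0 ≤ i ≤ n−1, 0 ≤ j ≤ k+δ−1. Then 𝒢 is superregular; moreover, writing its columns in order as g_{0,1}, g_{1,1}, …, g_{0,δ}, g_{1,δ}, g_{0,δ+1}, …, g_{0,k} and setting G(z) = G_0 + G_1 z with G_i = [g_{i,1} … g_{i,k}] (with g_{1,r} = 0 for r > δ), G(z) is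 the generator matrix of an MDS convolutional code of rate k/n and degree δ over F_{p^N}, i.e., Im_{F[z]} G(z) has degree δ and free distance n − k + δ + 1. -/
open Matrix Polynomial Finset

/-!
A square submatrix of `𝒢` on rows `a₁ < ⋯ < a_s` and columns `b₁ < ⋯ < b_s` has determinant
`∑_σ sign σ · α ^ e(σ)` with `e(σ) = ∑ᵢ 2 ^ (a_{σ i} + bᵢ)`. By the rearrangement inequality the
identity is the unique maximiser of `e`, and `e(1) < 2 ^ (n + k + δ - 1) ≤ N`, the degree of the
minimal polynomial of the primitive element `α` over `𝔽_p`. So the determinant is a nonzero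
polynomial of degree `< N` evaluated at `α`, hence nonzero.

The `z ^ j`-coefficient of a codeword `G(z) u(z)` is `𝒢`, with its columns reordered, applied to
the vector made of the `z ^ j`-coefficients of `u` and the `z ^ (j - 1)`-coefficients of its first
`δ` entries. A superregular `n`-rowed matrix maps a nonzero vector of weight `t` to one of weight
at least `n + 1 - t`; applied to the lowest and the highest coefficient layers of `u` this bounds
the weight of the codeword from below. A constant codeword supported on the last `k - δ` columns
attains the bound, and the `z ^ δ`-coefficient of each `k × k` minor of `G` is a minor of `𝒢`,
which gives the degree.
-/

theorem Equiv.Perm.eq_one_of_strictMono {s : ℕ} {σ : Equiv.Perm (Fin s)} (hσ : StrictMono σ) :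
    σ = 1 :=
  Equiv.ext fun i => congrArg (· i) <| congrArg DFunLike.coe <|
    Subsingleton.elim (hσ.orderIsoOfSurjective σ σ.surjective) (OrderIso.refl _)

theorem sum_two_pow_comp_perm_lt {s : ℕ} {A B : Fin s → ℕ} (hA : StrictMono A)
    (hB : StrictMono B) {σ : Equiv.Perm (Fin s)} (hσ : σ ≠ 1) :
    ∑ i, 2 ^ (A (σ i) + B i) < ∑ i, 2 ^ (A i + B i) := by
  have h2 : StrictMono ((2 : ℕ) ^ ·) := pow_right_strictMono₀ one_lt_two
  set f := fun i => 2 ^ B i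
  set g := fun i => 2 ^ A i
  have hf : StrictMono f := h2.comp hB
  have hg : StrictMono g := h2.comp hA
  simp only [pow_add, mul_comm (2 ^ A _)]
  refine (hf.monotone.monovary hg.monotone).sum_mul_comp_perm_lt_sum_mul_iff.mpr fun h => ?_
  refine hσ (Equiv.Perm.eq_one_of_strictMono fun i j hij => ?_)
  by_contra! hji
  exact (h (hg (hji.lt_of_ne (σ.injective.ne hij.ne')))).not_gt (hf hij)

theorem sum_two_pow_lt_of_strictMono {s m : ℕ} {c : Fin s → ℕ} (hc : StrictMono c)
    (hm : ∀ i, c i < m) : ∑ i, 2 ^ c i < 2 ^ m := by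
  rw [← Finset.sum_image fun i _ j _ h => hc.injective h]
  exact Nat.geomSum_lt le_rfl (by simpa using hm)

theorem det_of_pow_ne_zero {K L : Type*} [Field K] [CommRing L] [Algebra K L]
    {ι : Type*} [Fintype ι] [DecidableEq ι] (α : L) (E : ι → ι → ℕ)
    (hE : ∀ σ : Equiv.Perm ι, σ ≠ 1 → ∑ i, E (σ i) i < ∑ i, E i i)
    (hdeg : ∑ i, E i i < (minpoly K α).natDegree) :
    (of fun i j => α ^ E i j).det ≠ 0 := by
  intro hdet
  set P : K[X] := ∑ σ : Equiv.Perm ι, C ((Equiv.Perm.sign σ : ℤ) : K) * X ^ (∑ i, E (σ i) i)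
  have hcoeff : P.coeff (∑ i, E i i) = 1 := by
    rw [finsetSum_coeff, Finset.sum_eq_single 1 (fun σ _ hσ => by simp [(hE σ hσ).ne']) (by simp)]
    simp
  have hP : P ≠ 0 := fun h => by simp [h] at hcoeff
  have hroot : aeval α P = 0 := by
    rw [← hdet, det_apply]
    simp [P, Units.smul_def, Finset.prod_pow_eq_pow_sum]
  have hle : P.natDegree ≤ ∑ i, E i i :=
    natDegree_sum_le_of_forall_le _ _ fun σ _ => (natDegree_C_mul_X_pow_le _ _).trans <| by
      rcases eq_or_ne σ 1 with rfl | hσ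
      · simp
      · exact (hE σ hσ).le
  have := natDegree_le_natDegree (minpoly.degree_le_of_ne_zero K α hP hroot)
  omega

theorem superregular_of_pow_two_pow {K L : Type*} [Field K] [Field L] [Algebra K L] {α : L}
    {r ℓ : ℕ} (A : Matrix (Fin r) (Fin ℓ) L) (hA : ∀ i j, A i j = α ^ 2 ^ ((i : ℕ) + j))
    (hdeg : 2 ^ (r + ℓ - 1) ≤ (minpoly K α).natDegree) : Superregular A := by
  intro s f g hf hg
  have hsub : A.submatrix f g = of fun i j => α ^ 2 ^ ((f i : ℕ) + g j) := by
    ext i j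
    exact hA _ _
  rw [hsub]
  refine det_of_pow_ne_zero (K := K) α _ (fun σ hσ => sum_two_pow_comp_perm_lt hf hg hσ) ?_
  refine (sum_two_pow_lt_of_strictMono (m := r + ℓ - 1) (fun i j hij => ?_) fun i => ?_).trans_le
    hdeg
  · exact Nat.add_lt_add (hf hij) (hg hij)
  · have := (f i).isLt
    have := (g i).isLt
    omega

open scoped IntermediateField in
theorem adjoin_simple_eq_top_of_orderOf_eq {K L : Type*} [Field K] [Field L] [Fintype L]
    [Algebra K L] {α : L} (hα : orderOf α = Fintype.card L - 1) : K⟮α⟯ = ⊤ := by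
  have hα0 : α ≠ 0 := by
    rintro rfl
    have := Fintype.one_lt_card (α := L)
    simp at hα
    omega
  set a := Units.mk0 α hα0
  have hgen : ∀ x : Lˣ, x ∈ Subgroup.zpowers a := by
    rw [← Subgroup.eq_top_iff', ← Subgroup.card_eq_iff_eq_top, Nat.card_zpowers, ← orderOf_units,
      Units.val_mk0, hα, Nat.card_units, Nat.card_eq_fintype_card]
  rw [eq_top_iff]
  rintro x -
  by_cases hx : x = 0
  · rw [hx]
    exact zero_mem _
  · obtain ⟨m, hm⟩ := hgen (Units.mk0 x hx)
    rw [show x = α ^ m by rw [← Units.val_mk0 hx, ← hm]; simp [a]]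
    exact zpow_mem (IntermediateField.mem_adjoin_simple_self K α) m

theorem natDegree_minpoly_of_orderOf_eq {K L : Type*} [Field K] [Field L] [Fintype L]
    [Algebra K L] {α : L} (hα : orderOf α = Fintype.card L - 1) :
    (minpoly K α).natDegree = Module.finrank K L := by
  rw [← IntermediateField.adjoin.finrank (.of_finite K α), adjoin_simple_eq_top_of_orderOf_eq hα,
    IntermediateField.finrank_top']

theorem natDegree_minpoly_zmod_of_orderOf_eq {F : Type*} [Field F] [Fintype F] {p N : ℕ}
    [Fact p.Prime] [Algebra (ZMod p) F] (hcard : Fintype.card F = p ^ N) {α : F}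
    (hα : orderOf α = p ^ N - 1) : (minpoly (ZMod p) α).natDegree = N := by
  rw [natDegree_minpoly_of_orderOf_eq (hcard ▸ hα)]
  exact Nat.pow_right_injective (Fact.out : p.Prime).two_le
    ((FiniteField.pow_finrank_eq_card p F).trans hcard)

theorem superregular_of_orderOf_eq {F : Type*} [Field F] [Fintype F] {p N r ℓ : ℕ}
    (hp : p.Prime) (hcard : Fintype.card F = p ^ N) {α : F} (hα : orderOf α = p ^ N - 1)
    (hN : 2 ^ (r + ℓ - 1) ≤ N) (A : Matrix (Fin r) (Fin ℓ) F)
    (hA : ∀ i j, A i j = α ^ 2 ^ ((i : ℕ) + j)) : Superregular A := by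
  have : Fact p.Prime := ⟨hp⟩
  have : CharP F p := charP_of_card_eq_prime_pow hcard
  let : Algebra (ZMod p) F := ZMod.algebra F p
  exact superregular_of_pow_two_pow (K := ZMod p) A hA
    (natDegree_minpoly_zmod_of_orderOf_eq hcard hα ▸ hN)

theorem hammingNorm_comp_equiv {ι κ F : Type*} [Fintype ι] [Fintype κ] [Zero F] [DecidableEq F]
    (w : κ → F) (e : ι ≃ κ) : hammingNorm (w ∘ e) = hammingNorm w := by
  simp only [hammingNorm, card_filter, Function.comp_apply]
  exact e.sum_comp fun c => if w c ≠ 0 then 1 else 0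

theorem hammingNorm_sumElim {α β F : Type*} [Fintype α] [Fintype β] [Zero F] [DecidableEq F]
    (a : α → F) (b : β → F) : hammingNorm (Sum.elim a b) = hammingNorm a + hammingNorm b := by
  simp only [hammingNorm, card_filter, Fintype.sum_sum_type, Sum.elim_inl, Sum.elim_inr]
  rfl

theorem hammingNorm_add_le_of_comp_eq_zero {ι F : Type*} [Fintype ι] [Zero F] [DecidableEq F]
    {m : ℕ} {e : Fin m → ι} (he : Function.Injective e) {v : ι → F} (hv : ∀ i, v (e i) = 0) :
    hammingNorm v + m ≤ Fintype.card ι := by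
  classical
  have hsub : ({i | v i ≠ 0} : Finset ι) ⊆ (univ.map ⟨e, he⟩)ᶜ := by
    intro i hi
    simp only [mem_compl, mem_map, mem_univ, true_and, not_exists]
    rintro j rfl
    exact (mem_filter.mp hi).2 (hv j)
  have := card_le_card hsub
  rw [card_compl, card_map, card_univ, Fintype.card_fin] at this
  have := Fintype.card_le_of_injective e he
  rw [Fintype.card_fin] at this
  unfold hammingNorm
  omega

theorem Superregular.add_one_le_hammingNorm {F : Type*} [Field F] [DecidableEq F] {r ℓ : ℕ}
    {A : Matrix (Fin r) (Fin ℓ) F} (hA : Superregular A) {w : Fin ℓ → F} (hw : w ≠ 0) :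
    r + 1 ≤ hammingNorm (A *ᵥ w) + hammingNorm w := by
  by_contra! hlt
  set T : Finset (Fin ℓ) := {c | w c ≠ 0}
  have hZ : #T ≤ #({x | (A *ᵥ w) x = 0} : Finset (Fin r)) := by
    have := card_filter_add_card_filter_not (s := univ) (fun x => (A *ᵥ w) x ≠ 0)
    simp only [not_not, card_univ, Fintype.card_fin] at this
    change #{x | (A *ᵥ w) x ≠ 0} + #T < r + 1 at hlt
    omega
  obtain ⟨Z, hZsub, hZcard⟩ := exists_subset_card_eq hZ
  set f := Z.orderEmbOfFin hZcard
  set g := T.orderEmbOfFin rfl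
  have hker : A.submatrix f g *ᵥ (w ∘ g) = 0 := by
    ext i
    have hfi : (A *ᵥ w) (f i) = 0 := (mem_filter.mp (hZsub (Z.orderEmbOfFin_mem hZcard i))).2
    calc (A.submatrix f g *ᵥ (w ∘ g)) i = ∑ j, A (f i) (g j) * w (g j) := rfl
      _ = ∑ c ∈ T, A (f i) c * w c := by
        rw [← sum_coe_sort T, ← (T.orderIsoOfFin rfl).toEquiv.sum_comp]; rfl
      _ = (A *ᵥ w) (f i) := sum_filter_of_ne fun c _ h => right_ne_zero_of_mul h
      _ = 0 := hfi
  have hwg := eq_zero_of_mulVec_eq_zero (hA _ f g f.strictMono g.strictMono) hker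
  refine hw (hammingNorm_eq_zero.mp (card_eq_zero.mpr (eq_empty_of_forall_notMem fun c hc => ?_)))
  obtain ⟨i, rfl⟩ : c ∈ Set.range g := by rw [T.range_orderEmbOfFin]; exact hc
  exact (mem_filter.mp hc).2 (congrFun hwg i)

theorem Superregular.add_one_le_hammingNorm_submatrix {F : Type*} [Field F] [DecidableEq F]
    {r ℓ : ℕ} {A : Matrix (Fin r) (Fin ℓ) F} (hA : Superregular A) {ι : Type*} [Fintype ι]
    (e : ι ≃ Fin ℓ) {w : ι → F} (hw : w ≠ 0) :
    r + 1 ≤ hammingNorm (A.submatrix id e *ᵥ w) + hammingNorm w := by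
  rw [submatrix_mulVec_equiv, Function.comp_id, ← hammingNorm_comp_equiv w e.symm]
  exact hA.add_one_le_hammingNorm fun h => hw (funext fun i => by simpa using congrFun h (e i))

theorem prod_C_add_ite_C_mul_X {K ι : Type*} [CommRing K] [Fintype ι] [DecidableEq ι]
    (S : Finset ι) (a b : ι → K) :
    ∏ j, (C (a j) + (if j ∈ S then C (b j) else 0) * X) =
      (∏ j ∈ S, (C (a j) + C (b j) * X)) * C (∏ j ∈ Sᶜ, a j) := by
  rw [← prod_mul_prod_compl S, map_prod]
  congr 1 <;> refine prod_congr rfl fun j hj => ?_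
  · rw [if_pos hj]
  · rw [if_neg (mem_compl.mp hj), zero_mul, add_zero]

theorem Polynomial.natDegree_C_add_C_mul_X_le {K : Type*} [CommRing K] (a b : K) :
    (C a + C b * X).natDegree ≤ 1 := by
  rw [add_comm]
  exact natDegree_linear_le

theorem natDegree_prod_C_add_C_mul_X_le {K ι : Type*} [CommRing K] (S : Finset ι) (a b : ι → K) :
    (∏ j ∈ S, (C (a j) + C (b j) * X)).natDegree ≤ #S :=
  (natDegree_prod_le S _).trans
    ((sum_le_card_nsmul S _ 1 fun j _ => natDegree_C_add_C_mul_X_le _ _).trans (by simp))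

theorem coeff_prod_C_add_C_mul_X_card {K ι : Type*} [CommRing K] (S : Finset ι) (a b : ι → K) :
    (∏ j ∈ S, (C (a j) + C (b j) * X)).coeff #S = ∏ j ∈ S, b j := by
  simpa [coeff_C] using
    coeff_prod_of_natDegree_le S _ 1 fun j _ => natDegree_C_add_C_mul_X_le (a j) (b j)

theorem natDegree_det_le_and_coeff_det {K ι : Type*} [CommRing K] [Fintype ι] [DecidableEq ι]
    (S : Finset ι) (a b : Matrix ι ι K) (M : Matrix ι ι K[X])
    (hM : ∀ i j, M i j = C (a i j) + (if j ∈ S then C (b i j) else 0) * X) :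
    M.det.natDegree ≤ #S ∧
      M.det.coeff #S = (of fun i j => if j ∈ S then b i j else a i j).det := by
  simp only [det_apply, hM, prod_C_add_ite_C_mul_X, Units.smul_def]
  constructor
  · refine natDegree_sum_le_of_forall_le _ _ fun σ _ => ?_
    grw [natDegree_smul_le, natDegree_mul_C_le, natDegree_prod_C_add_C_mul_X_le]
  · simp only [finsetSum_coeff, coeff_smul, coeff_mul_C, coeff_prod_C_add_C_mul_X_card, of_apply]
    simp [prod_ite, compl_eq_univ_sdiff, filter_not]

theorem sum_hammingNorm_coeff_le_polyWeight {F : Type*} [Field F] [DecidableEq F] {n : ℕ}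
    (v : Fin n → F[X]) (s : Finset ℕ) :
    ∑ j ∈ s, hammingNorm (fun x => (v x).coeff j) ≤ polyWeight v := by
  simp only [hammingNorm, polyWeight, card_filter]
  rw [sum_comm]
  refine sum_le_sum fun x _ => ?_
  rw [← card_filter]
  exact card_le_card fun j => by simp

theorem hammingNorm_coeff_le_polyWeight {F : Type*} [Field F] [DecidableEq F] {n : ℕ}
    (v : Fin n → F[X]) (j : ℕ) : hammingNorm (fun x => (v x).coeff j) ≤ polyWeight v := by
  simpa using sum_hammingNorm_coeff_le_polyWeight v {j}

theorem hammingNorm_coeff_add_le_polyWeight {F : Type*} [Field F] [DecidableEq F] {n : ℕ}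
    (v : Fin n → F[X]) {j j' : ℕ} (h : j ≠ j') :
    hammingNorm (fun x => (v x).coeff j) + hammingNorm (fun x => (v x).coeff j') ≤
      polyWeight v := by
  simpa [sum_pair h] using sum_hammingNorm_coeff_le_polyWeight v {j, j'}

theorem Polynomial.coeff_X_mul_eq_zero {R : Type*} [Semiring R] {p : R[X]} {j : ℕ}
    (hp : ∀ i < j, p.coeff i = 0) : (X * p).coeff j = 0 := by
  rcases Nat.eq_zero_or_eq_succ_pred j with h | h
  · rw [h, coeff_X_mul_zero]
  · rw [h, coeff_X_mul, hp _ (by omega)]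

theorem polyWeight_C {F : Type*} [Field F] [DecidableEq F] {n : ℕ} (v : Fin n → F) :
    polyWeight (fun x => C (v x)) = hammingNorm v := by
  simp only [polyWeight, hammingNorm, card_filter]
  refine sum_congr rfl fun x _ => ?_
  split_ifs with h
  · simp [support_C h]
  · simp_all

theorem exists_coeff_ne_zero_window {ι R : Type*} [Fintype ι] [Semiring R] {u : ι → R[X]}
    (hu : u ≠ 0) : ∃ j₀ J, j₀ ≤ J ∧ (∃ r, (u r).coeff j₀ ≠ 0) ∧ (∃ r, (u r).coeff J ≠ 0) ∧
      (∀ r i, i < j₀ → (u r).coeff i = 0) ∧ (∀ r i, J < i → (u r).coeff i = 0) := by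
  classical
  set S := univ.biUnion fun r => (u r).support
  have hmem : ∀ r i, (u r).coeff i ≠ 0 → i ∈ S := fun r i h =>
    mem_biUnion.mpr ⟨r, mem_univ r, mem_support_iff.mpr h⟩
  have hS : S.Nonempty := by
    obtain ⟨r, hr⟩ := Function.ne_iff.mp hu
    exact ⟨_, mem_biUnion.mpr ⟨r, mem_univ r, (support_nonempty.mpr hr).choose_spec⟩⟩
  obtain ⟨r₀, -, hr₀⟩ := mem_biUnion.mp (S.min'_mem hS)
  obtain ⟨r₁, -, hr₁⟩ := mem_biUnion.mp (S.max'_mem hS)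
  refine ⟨S.min' hS, S.max' hS, S.min'_le _ (S.max'_mem hS), ⟨r₀, mem_support_iff.mp hr₀⟩,
    ⟨r₁, mem_support_iff.mp hr₁⟩, fun r i hi => ?_, fun r i hi => ?_⟩
  · by_contra hc
    exact (S.min'_le _ (hmem r i hc)).not_gt hi
  · by_contra hc
    exact (S.le_max' _ (hmem r i hc)).not_gt hi

theorem Matrix.exists_ne_zero_mulVec_eq_zero_of_card_lt {K m ι : Type*} [Field K] [Fintype m]
    [Fintype ι] (M : Matrix m ι K) (h : Fintype.card m < Fintype.card ι) :
    ∃ y ≠ 0, M *ᵥ y = 0 := by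
  obtain ⟨y, hy, hy0⟩ := Submodule.exists_mem_ne_zero_of_ne_bot
    (LinearMap.ker_ne_bot_of_finrank_lt (f := M.mulVecLin) (by simpa using h))
  exact ⟨y, hy0, hy⟩

theorem freeDist_eq_of_le_of_exists {F : Type*} [Field F] {n k d : ℕ}
    {G : Matrix (Fin n) (Fin k) F[X]} (hle : ∀ u, G *ᵥ u ≠ 0 → d ≤ polyWeight (G *ᵥ u))
    (hex : ∃ u, G *ᵥ u ≠ 0 ∧ polyWeight (G *ᵥ u) ≤ d) : freeDist G = d := by
  obtain ⟨u, hu, hwt⟩ := hex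
  have hmem : polyWeight (G *ᵥ u) ∈
      {w | ∃ u : Fin k → F[X], G *ᵥ u ≠ 0 ∧ w = polyWeight (G *ᵥ u)} := ⟨u, hu, rfl⟩
  refine le_antisymm ((Nat.sInf_le hmem).trans hwt) (le_csInf ⟨_, hmem⟩ ?_)
  rintro _ ⟨u, hu, rfl⟩
  exact hle u hu

section ConvolutionalCode

variable {F : Type*} [Field F] {n k δ : ℕ}

noncomputable def convGenerator (δ : ℕ) (G₀ G₁ : Matrix (Fin n) (Fin k) F) :
    Matrix (Fin n) (Fin k) F[X] :=
  of fun x r => C (G₀ x r) + (if (r : ℕ) < δ then C (G₁ x r) else 0) * X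

def highCoeffMatrix (δ : ℕ) (G₀ G₁ : Matrix (Fin n) (Fin k) F) : Matrix (Fin n) (Fin k) F :=
  of fun x r => if (r : ℕ) < δ then G₁ x r else G₀ x r

def slidingMatrix (hδk : δ ≤ k) (G₀ G₁ : Matrix (Fin n) (Fin k) F) :
    Matrix (Fin n) (Fin k ⊕ Fin δ) F :=
  fromCols G₀ (G₁.submatrix id (Fin.castLE hδk))

noncomputable def slidingCoeff (hδk : δ ≤ k) (u : Fin k → F[X]) (j : ℕ) : Fin k ⊕ Fin δ → F :=
  Sum.elim (fun r => (u r).coeff j) (fun r => (X * u (Fin.castLE hδk r)).coeff j)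

theorem natDegree_det_convGenerator_le_and_coeff (hδk : δ ≤ k) (G₀ G₁ : Matrix (Fin n) (Fin k) F)
    (f : Fin k → Fin n) :
    ((convGenerator δ G₀ G₁).submatrix f id).det.natDegree ≤ δ ∧
      ((convGenerator δ G₀ G₁).submatrix f id).det.coeff δ =
        ((highCoeffMatrix δ G₀ G₁).submatrix f id).det := by
  have hS : #({r | (r : ℕ) < δ} : Finset (Fin k)) = δ := by
    rw [Fin.card_filter_val_lt, min_eq_right hδk]
  have := natDegree_det_le_and_coeff_det ({r | (r : ℕ) < δ} : Finset (Fin k))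
    (G₀.submatrix f id) (G₁.submatrix f id) ((convGenerator δ G₀ G₁).submatrix f id)
    fun i j => by simp [convGenerator]
  rw [hS] at this
  refine ⟨this.1, this.2.trans (congrArg det ?_)⟩
  ext i j
  simp [highCoeffMatrix]

theorem maxMinorDeg_convGenerator (hδk : δ ≤ k) (G₀ G₁ : Matrix (Fin n) (Fin k) F)
    {f : Fin k → Fin n} (hf : ((highCoeffMatrix δ G₀ G₁).submatrix f id).det ≠ 0) :
    maxMinorDeg (convGenerator δ G₀ G₁) = δ := by
  refine le_antisymm
    (Finset.sup_le fun f _ => (natDegree_det_convGenerator_le_and_coeff hδk G₀ G₁ f).1) ?_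
  refine le_trans ?_ (Finset.le_sup (f := fun f : Fin k → Fin n =>
    ((convGenerator δ G₀ G₁).submatrix f id).det.natDegree) (mem_univ f))
  refine le_natDegree_of_ne_zero ?_
  rw [(natDegree_det_convGenerator_le_and_coeff hδk G₀ G₁ f).2]
  exact hf

theorem coeff_convGenerator_mulVec (hδk : δ ≤ k) (G₀ G₁ : Matrix (Fin n) (Fin k) F)
    (u : Fin k → F[X]) (j : ℕ) :
    (fun x => ((convGenerator δ G₀ G₁ *ᵥ u) x).coeff j) =
      slidingMatrix hδk G₀ G₁ *ᵥ slidingCoeff hδk u j := by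
  ext x
  rw [slidingMatrix, slidingCoeff, fromCols_mulVec_sumElim]
  simp only [Pi.add_apply, mulVec, dotProduct, convGenerator, of_apply, submatrix_apply, id_eq,
    finsetSum_coeff, add_mul, coeff_add, coeff_C_mul, sum_add_distrib]
  congr 1
  refine (Fintype.sum_of_injective (Fin.castLE hδk) (Fin.castLE_injective hδk) _ _
    (fun r hr => ?_) fun r => ?_).symm
  · have : ¬ (r : ℕ) < δ := fun h => hr ⟨⟨r, h⟩, rfl⟩
    simp [this]
  · simp [mul_assoc, coeff_C_mul]

theorem convGenerator_mulVec_C {G₀ G₁ : Matrix (Fin n) (Fin k) F} {y : Fin k → F}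
    (hy : ∀ r : Fin k, (r : ℕ) < δ → y r = 0) :
    convGenerator δ G₀ G₁ *ᵥ (fun r => C (y r)) = fun x => C ((G₀ *ᵥ y) x) := by
  ext1 x
  simp only [mulVec, dotProduct, convGenerator, of_apply, map_sum]
  refine sum_congr rfl fun r _ => ?_
  by_cases h : (r : ℕ) < δ <;> simp [h, hy]

variable [DecidableEq F]

theorem add_one_le_hammingNorm_coeff_convGenerator_mulVec (hδk : δ ≤ k)
    {G₀ G₁ : Matrix (Fin n) (Fin k) F}
    (hA : ∀ w, w ≠ 0 → n + 1 ≤ hammingNorm (slidingMatrix hδk G₀ G₁ *ᵥ w) + hammingNorm w)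
    (u : Fin k → F[X]) (j : ℕ) (hj : slidingCoeff hδk u j ≠ 0) :
    n + 1 ≤ hammingNorm (fun x => ((convGenerator δ G₀ G₁ *ᵥ u) x).coeff j) +
      (hammingNorm (fun r => (u r).coeff j) +
        hammingNorm (fun r => (X * u (Fin.castLE hδk r)).coeff j)) := by
  rw [← hammingNorm_sumElim, coeff_convGenerator_mulVec hδk]
  exact hA _ hj

theorem add_le_polyWeight_convGenerator_mulVec (hδk : δ ≤ k) (hkn : k ≤ n) (hn : k + δ ≤ n + 1)
    {G₀ G₁ : Matrix (Fin n) (Fin k) F}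
    (hA : ∀ w, w ≠ 0 → n + 1 ≤ hammingNorm (slidingMatrix hδk G₀ G₁ *ᵥ w) + hammingNorm w)
    {u : Fin k → F[X]} (hu : u ≠ 0) :
    n - k + δ + 1 ≤ polyWeight (convGenerator δ G₀ G₁ *ᵥ u) := by
  have hlayer := add_one_le_hammingNorm_coeff_convGenerator_mulVec hδk hA u
  set v := convGenerator δ G₀ G₁ *ᵥ u
  have hcard : ∀ {m : ℕ} (w : Fin m → F), hammingNorm w ≤ m := fun w =>
    hammingNorm_le_card_fintype.trans_eq (Fintype.card_fin _)
  have hne : ∀ j r, (u r).coeff j ≠ 0 → slidingCoeff hδk u j ≠ 0 := fun j r hr h =>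
    hr (by simpa [slidingCoeff] using congrFun h (.inl r))
  obtain ⟨j₀, J, hj₀J, ⟨r₀, hr₀⟩, ⟨r₁, hr₁⟩, hbelow, habove⟩ := exists_coeff_ne_zero_window hu
  have hshift : hammingNorm (fun r => (X * u (Fin.castLE hδk r)).coeff j₀) = 0 :=
    hammingNorm_eq_zero.mpr (funext fun r => coeff_X_mul_eq_zero (hbelow _))
  have h₀ := hlayer _ (hne _ _ hr₀)
  have := hcard fun r => (u r).coeff j₀
  -- Either layer `J + 1` is nonzero and lives on the `δ` shifted columns only, or layer `J`
  -- avoids the first `δ` columns of `G₀`.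
  by_cases hcase : ∃ r : Fin δ, (u (Fin.castLE hδk r)).coeff J ≠ 0
  · obtain ⟨r, hr⟩ := hcase
    have hJ₁ : hammingNorm (fun r => (u r).coeff (J + 1)) = 0 :=
      hammingNorm_eq_zero.mpr (funext fun r => habove r _ (by omega))
    have h₁ := hlayer (J + 1) fun h => hr (by simpa [slidingCoeff] using congrFun h (.inr r))
    have := hcard fun r => (X * u (Fin.castLE hδk r)).coeff (J + 1)
    have := hammingNorm_coeff_add_le_polyWeight v (j := j₀) (j' := J + 1) (by omega)
    omega
  · push Not at hcase
    have h₁ := hlayer _ (hne _ _ hr₁)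
    have hlow := hammingNorm_add_le_of_comp_eq_zero (v := fun r => (u r).coeff J)
      (Fin.castLE_injective hδk) hcase
    rw [Fintype.card_fin] at hlow
    have := hcard fun r => (X * u (Fin.castLE hδk r)).coeff J
    rcases hj₀J.eq_or_lt with heq | hlt
    · rw [← heq] at h₁ hlow
      have := hammingNorm_coeff_le_polyWeight v j₀
      omega
    · have := hammingNorm_coeff_add_le_polyWeight v hlt.ne
      omega

theorem exists_polyWeight_convGenerator_mulVec_le (hδk : δ < k) (hkn : k ≤ n)
    {G₀ G₁ : Matrix (Fin n) (Fin k) F}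
    (hA : ∀ w, w ≠ 0 → n + 1 ≤ hammingNorm (slidingMatrix hδk.le G₀ G₁ *ᵥ w) + hammingNorm w) :
    ∃ u, convGenerator δ G₀ G₁ *ᵥ u ≠ 0 ∧
      polyWeight (convGenerator δ G₀ G₁ *ᵥ u) ≤ n - k + δ + 1 := by
  obtain ⟨y, hy0, hy⟩ := exists_ne_zero_mulVec_eq_zero_of_card_lt
    (fromRows ((1 : Matrix (Fin k) (Fin k) F).submatrix (Fin.castLE hδk.le) (Equiv.refl _))
      (G₀.submatrix (Fin.castLE (show k - δ - 1 ≤ n by omega)) (Equiv.refl _))) (by simp; omega)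
  rw [fromRows_mulVec, submatrix_mulVec_equiv, submatrix_mulVec_equiv] at hy
  have hy₁ : ∀ i, y (Fin.castLE hδk.le i) = 0 := fun i => by simpa using congrFun hy (.inl i)
  have hy₂ : ∀ i, (G₀ *ᵥ y) (Fin.castLE _ i) = 0 := fun i => by simpa using congrFun hy (.inr i)
  have hwt := hA (Sum.elim y 0) fun h => hy0 (funext fun r => by simpa using congrFun h (.inl r))
  rw [slidingMatrix, fromCols_mulVec_sumElim, mulVec_zero, add_zero, hammingNorm_sumElim,
    hammingNorm_zero] at hwt
  have hy := hammingNorm_add_le_of_comp_eq_zero (Fin.castLE_injective _) hy₁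
  have hGy := hammingNorm_add_le_of_comp_eq_zero (Fin.castLE_injective _) hy₂
  simp only [Fintype.card_fin] at hy hGy
  refine ⟨fun r => C (y r), ?_⟩
  rw [convGenerator_mulVec_C fun r hr => hy₁ ⟨r, hr⟩, polyWeight_C]
  refine ⟨fun h => ?_, by omega⟩
  have : G₀ *ᵥ y = 0 := funext fun x => C_eq_zero.mp (congrFun h x)
  rw [this, hammingNorm_zero] at hwt
  omega

end ConvolutionalCode

section Construction

variable {F : Type*} [Field F] {n k δ : ℕ}

def powTwoPowMatrix (n : ℕ) (α : F) {ι : Type*} (c : ι → ℕ) : Matrix (Fin n) ι F :=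
  of fun x r => α ^ 2 ^ ((x : ℕ) + c r)

/-- The columns of `𝒢` are `g₀₁, g₁₁, …, g₀δ, g₁δ, g₀₍δ₊₁₎, …, g₀ₖ`: `inl r` is the column
of `g₀₍ᵣ₊₁₎` and `inr r` the column of `g₁₍ᵣ₊₁₎`. -/
def interleavedCol (hδk : δ ≤ k) : Fin k ⊕ Fin δ → Fin (k + δ) :=
  Sum.elim (fun r => ⟨if (r : ℕ) < δ then 2 * r else δ + r, by split_ifs <;> omega⟩)
    fun r => ⟨2 * r + 1, by omega⟩

theorem interleavedCol_injective (hδk : δ ≤ k) : Function.Injective (interleavedCol hδk) := by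
  rintro (r | r) (s | s) h <;>
    simp only [interleavedCol, Sum.elim_inl, Sum.elim_inr, Sum.inl.injEq, Sum.inr.injEq,
      reduceCtorEq, Fin.ext_iff] at h ⊢ <;>
    (try split_ifs at h) <;> omega

noncomputable def interleavedColEquiv (hδk : δ ≤ k) : Fin k ⊕ Fin δ ≃ Fin (k + δ) :=
  Equiv.ofBijective _ ((Fintype.bijective_iff_injective_and_card _).mpr
    ⟨interleavedCol_injective hδk, by simp⟩)

def highCol (hδk : δ ≤ k) (r : Fin k) : Fin (k + δ) :=
  ⟨if (r : ℕ) < δ then 2 * r + 1 else δ + r, by split_ifs <;> omega⟩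

theorem highCol_strictMono (hδk : δ ≤ k) : StrictMono (highCol hδk) := by
  intro r s h
  simp only [highCol, Fin.mk_lt_mk]
  rw [Fin.lt_def] at h
  split_ifs <;> omega

theorem slidingMatrix_powTwoPowMatrix (hδk : δ ≤ k) (α : F) :
    slidingMatrix hδk
      (powTwoPowMatrix n α fun r : Fin k => if (r : ℕ) < δ then 2 * (r : ℕ) else δ + r)
      (powTwoPowMatrix n α fun r : Fin k => 2 * (r : ℕ) + 1) =
      (powTwoPowMatrix n α fun c : Fin (k + δ) => (c : ℕ)).submatrix id
        (interleavedColEquiv hδk) := by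
  ext x (r | r) <;> rfl

theorem highCoeffMatrix_powTwoPowMatrix (hδk : δ ≤ k) (α : F) :
    highCoeffMatrix δ
      (powTwoPowMatrix n α fun r : Fin k => if (r : ℕ) < δ then 2 * (r : ℕ) else δ + r)
      (powTwoPowMatrix n α fun r : Fin k => 2 * (r : ℕ) + 1) =
      (powTwoPowMatrix n α fun c : Fin (k + δ) => (c : ℕ)).submatrix id (highCol hδk) := by
  ext x r
  simp only [highCoeffMatrix, powTwoPowMatrix, of_apply, submatrix_apply, id_eq, highCol]
  split_ifs <;> rfl

end Construction

theorem construction2_small_delta_general {F : Type*} [Field F] [Fintype F]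
    {n k δ p N : ℕ} (hδk : δ < k) (hkn : k < n)
    (hn : n ≥ k + δ - 1)
    (hp : p.Prime) (hcard : Fintype.card F = p ^ N)
    (hN : N ≥ 2 ^ (n + k + δ - 1))
    (α : F) (hα : orderOf α = p ^ N - 1)
    (𝒢 : Matrix (Fin n) (Fin (k + δ)) F)
    (h𝒢 : ∀ (x : Fin n) (c₀ : Fin (k + δ)),
      𝒢 x c₀ = α ^ 2 ^ ((x : ℕ) + (c₀ : ℕ)))
    (G : Matrix (Fin n) (Fin k) (Polynomial F))
    (hG : ∀ (x : Fin n) (r : Fin k),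
      G x r = Polynomial.C (α ^ 2 ^ ((x : ℕ) + (if (r : ℕ) < δ then 2 * (r : ℕ) else δ + (r : ℕ)))) +
        (if (r : ℕ) < δ then Polynomial.C (α ^ 2 ^ ((x : ℕ) + (2 * (r : ℕ) + 1))) else 0)
          * Polynomial.X) :
    Superregular 𝒢
    ∧ (∀ u : Fin k → Polynomial F, G.mulVec u = 0 → u = 0)
    ∧ maxMinorDeg G = δ
    ∧ freeDist G = n - k + δ + 1 := by
  classical
  obtain rfl : 𝒢 = powTwoPowMatrix n α fun c : Fin (k + δ) => (c : ℕ) := Matrix.ext h𝒢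
  obtain rfl : G = convGenerator δ
      (powTwoPowMatrix n α fun r : Fin k => if (r : ℕ) < δ then 2 * (r : ℕ) else δ + r)
      (powTwoPowMatrix n α fun r : Fin k => 2 * (r : ℕ) + 1) := Matrix.ext hG
  have hsr : Superregular (powTwoPowMatrix n α fun c : Fin (k + δ) => (c : ℕ)) :=
    superregular_of_orderOf_eq hp hcard hα (by rw [← add_assoc]; exact hN) _ fun _ _ => rfl
  have hA : ∀ w, w ≠ 0 → n + 1 ≤ hammingNorm (slidingMatrix hδk.le _ _ *ᵥ w) + hammingNorm w :=
    fun w hw => slidingMatrix_powTwoPowMatrix hδk.le α ▸ hsr.add_one_le_hammingNorm_submatrix _ hw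
  have hlow := fun u (hu : u ≠ 0) =>
    add_le_polyWeight_convGenerator_mulVec hδk.le hkn.le (by omega) hA hu
  refine ⟨hsr, fun u hu => ?_, maxMinorDeg_convGenerator hδk.le _ _ (f := Fin.castLE hkn.le) ?_,
    freeDist_eq_of_le_of_exists (fun u hu => hlow u ?_)
      (exists_polyWeight_convGenerator_mulVec_le hδk hkn.le hA)⟩
  · by_contra h
    simpa [hu, polyWeight] using hlow u h
  · rw [highCoeffMatrix_powTwoPowMatrix hδk.le, submatrix_submatrix]
    exact hsr _ _ _ (Fin.strictMono_castLE hkn.le) (highCol_strictMono hδk.le)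
  · rintro rfl
    exact hu (mulVec_zero _)

/-- Construction 2 for `δ < k`: the matrix `𝒢` with entries `α^{2^{i+j}}`, for a primitive
element `α` of `F_{p^N}` with `N ≥ 2^{n+k+δ-1}`, is superregular, and the polynomial matrix
`G(z) = G₀ + G₁ z` whose coefficient vectors are the suitably arranged columns of `𝒢`
generates an MDS convolutional code of rate `k/n` and degree `δ`, i.e. the code has degree
`δ` and free distance `n - k + δ + 1`. -/
theorem construction2_small_delta {F : Type*} [Field F] [Fintype F]
    {n k δ p N : ℕ} (hδ : 0 < δ) (hδk : δ < k) (hkn : k < n)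
    (hn : n ≥ k + δ - 1)
    (hp : p.Prime) (hcard : Fintype.card F = p ^ N)
    (hN : N ≥ 2 ^ (n + k + δ - 1))
    (α : F) (hα : orderOf α = p ^ N - 1)
    (𝒢 : Matrix (Fin n) (Fin (k + δ)) F)
    (h𝒢 : ∀ (x : Fin n) (c₀ : Fin (k + δ)),
      𝒢 x c₀ = α ^ 2 ^ ((x : ℕ) + (c₀ : ℕ)))
    (G : Matrix (Fin n) (Fin k) (Polynomial F))
    (hG : ∀ (x : Fin n) (r : Fin k),
      G x r = Polynomial.C (α ^ 2 ^ ((x : ℕ) + (if (r : ℕ) < δ then 2 * (r : ℕ) else δ + (r : ℕ)))) +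
        (if (r : ℕ) < δ then Polynomial.C (α ^ 2 ^ ((x : ℕ) + (2 * (r : ℕ) + 1))) else 0)
          * Polynomial.X) :
    Superregular 𝒢
    ∧ (∀ u : Fin k → Polynomial F, G.mulVec u = 0 → u = 0)
    ∧ maxMinorDeg G = δ
    ∧ freeDist G = n - k + δ + 1 :=
  construction2_small_delta_general hδk hkn hn hp hcard hN α hα 𝒢 h𝒢 G hG
end
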